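/- Fix γ ≠ 0 and σ > 0, and define ℓ(γ,σ,x) = −log σ − (1 + 1/γ)·log(1 + γ·x/σ) for 0 < x < σ/max(−γ,0) (no upper restriction if γ > 0). If X has the generalized Pareto distribution with survival function (1+γx/σ)^{−1/γ}, γ > −1/2, then −E[∂²ℓ/∂γ² (γ,σ,X)] = 2/((1+γ)(1+2γ)), −E[∂²ℓ/∂σ²(γ,σ,X)]·σ² = 1/(1+2γ), and −E[∂²ℓ/∂γ∂σ(γ,σ,X)]·σ = 1/((1+γ)(1+2γ)). -/

import Mathlib

open MeasureTheory

/-- The generalized Pareto log-density `ℓ(γ,σ,x) = -log σ - (1 + 1/γ) log(1 + γx/σ)`. -/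
noncomputable def gpLogLik (γ σ x : ℝ) : ℝ :=
  -Real.log σ - (1 + 1/γ) * Real.log (1 + γ * x / σ)

/-!
If `V` is uniform on `(0,1]`, then `X = σ (V^{-γ} - 1)/γ` has survival function
`(1 + γx/σ)^{-1/γ}` on the support, so `μ` is the law of `X`. Along this substitution
`1 + γX/σ = V^{-γ}`, and each second partial derivative of `ℓ` at `X` becomes a quadratic
polynomial in `V^γ` plus a multiple of `log V`. The expectations then follow from
`E[V^p] = 1/(1+p)` for `p = γ, 2γ > -1` and `E[log V] = -1`.
-/

open Real Set Filter Topology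

lemma MeasureTheory.Measure.ext_of_Ioi {μ ν : Measure ℝ}
    [IsProbabilityMeasure μ] [IsProbabilityMeasure ν] (h : ∀ a, μ (Ioi a) = ν (Ioi a)) :
    μ = ν :=
  Measure.ext_of_Iic μ ν fun a => by
    rw [← compl_Ioi, prob_compl_eq_one_sub measurableSet_Ioi,
      prob_compl_eq_one_sub measurableSet_Ioi, h]

lemma integral_Ioc_zero_one_quadratic_rpow_add_log {γ : ℝ} (hγ : -1/2 < γ)
    (c₀ c₁ c₂ c₃ : ℝ) :
    ∫ v in Ioc 0 1, (c₀ + c₁ * v ^ γ + c₂ * (v ^ γ) ^ 2 + c₃ * log v)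
      = c₀ + c₁ / (1 + γ) + c₂ / (1 + 2 * γ) - c₃ := by
  have h₁ : -1 < γ := by linarith
  have h₂ : -1 < 2 * γ := by linarith
  have hsq : ∀ v ∈ uIcc (0:ℝ) 1, c₀ + c₁ * v ^ γ + c₂ * (v ^ γ) ^ 2 + c₃ * log v
      = c₀ + c₁ * v ^ γ + c₂ * v ^ (2 * γ) + c₃ * log v := fun v hv => by
    rw [uIcc_of_le zero_le_one] at hv
    rw [← rpow_natCast, ← rpow_mul hv.1, Nat.cast_ofNat, mul_comm γ]
  have i₁ := (intervalIntegral.intervalIntegrable_rpow' h₁ (a := 0) (b := 1)).const_mul c₁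
  have i₂ := (intervalIntegral.intervalIntegrable_rpow' h₂ (a := 0) (b := 1)).const_mul c₂
  have i₃ := (intervalIntegral.intervalIntegrable_log' (a := 0) (b := 1)).const_mul c₃
  rw [← intervalIntegral.integral_of_le zero_le_one, intervalIntegral.integral_congr hsq,
    intervalIntegral.integral_add ((intervalIntegrable_const.add i₁).add i₂) i₃,
    intervalIntegral.integral_add (intervalIntegrable_const.add i₁) i₂,
    intervalIntegral.integral_add intervalIntegrable_const i₁]
  simp only [intervalIntegral.integral_const_mul, integral_rpow (Or.inl h₁),
    integral_rpow (Or.inl h₂), integral_log,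
    zero_rpow (by linarith : γ + 1 ≠ 0), zero_rpow (by linarith : 2 * γ + 1 ≠ 0)]
  norm_num
  ring

section Derivatives

variable {γ σ x : ℝ}

lemma add_mul_ne_zero_of_one_add_mul_div_ne_zero (hσ : σ ≠ 0) (hw : 1 + γ * x / σ ≠ 0) :
    σ + γ * x ≠ 0 := by
  rw [show σ + γ * x = σ * (1 + γ * x / σ) by field_simp]
  exact mul_ne_zero hσ hw

lemma hasDerivAt_one_add_one_div (hγ0 : γ ≠ 0) :
    HasDerivAt (fun g : ℝ => 1 + 1/g) (-1/γ^2) γ := by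
  simpa [one_div, neg_div] using (hasDerivAt_inv hγ0).const_add 1

lemma hasDerivAt_one_add_mul_div : HasDerivAt (fun g => 1 + g * x / σ) (x / σ) γ := by
  simpa using ((hasDerivAt_id' γ).mul_const x).div_const σ |>.const_add 1

lemma hasDerivAt_log_one_add_mul_div (hw : 1 + γ * x / σ ≠ 0) :
    HasDerivAt (fun g => log (1 + g * x / σ)) (x / σ / (1 + γ * x / σ)) γ :=
  hasDerivAt_one_add_mul_div.log hw

lemma hasDerivAt_gpLogLik_shape (hγ0 : γ ≠ 0) (hw : 1 + γ * x / σ ≠ 0) :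
    HasDerivAt (fun g => gpLogLik g σ x)
      (log (1 + γ * x / σ) / γ^2 - (1 + 1/γ) * (x / σ / (1 + γ * x / σ))) γ :=
  ((hasDerivAt_one_add_one_div hγ0).mul (hasDerivAt_log_one_add_mul_div hw)).const_sub (-log σ)
    |>.congr_deriv (by ring)

lemma hasDerivAt_deriv_gpLogLik_shape (hγ0 : γ ≠ 0) (hw : 1 + γ * x / σ ≠ 0) :
    HasDerivAt (fun g => log (1 + g * x / σ) / g^2 - (1 + 1/g) * (x / σ / (1 + g * x / σ)))
      (-2 * log (1 + γ * x / σ) / γ^3 + 2 / γ^2 * (x / σ / (1 + γ * x / σ))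
        + (1 + 1/γ) * (x / σ / (1 + γ * x / σ))^2) γ := by
  have hq : HasDerivAt (fun g => x / σ / (1 + g * x / σ)) (-(x / σ / (1 + γ * x / σ))^2) γ :=
    (hasDerivAt_const γ (x / σ)).div hasDerivAt_one_add_mul_div hw
      |>.congr_deriv (by rw [div_pow]; ring)
  refine ((hasDerivAt_log_one_add_mul_div hw).div (hasDerivAt_pow 2 γ) (pow_ne_zero 2 hγ0)).sub
    ((hasDerivAt_one_add_one_div hγ0).mul hq) |>.congr_deriv ?_
  -- the identity uses only `w ≠ 0`, not how `w` depends on `x / σ`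
  generalize 1 + γ * x / σ = w at hw ⊢
  generalize x / σ = q
  norm_num
  field_simp
  ring

lemma hasDerivAt_gpLogLik_scale (hγ0 : γ ≠ 0) (hσ : σ ≠ 0) (hw : 1 + γ * x / σ ≠ 0) :
    HasDerivAt (fun s => gpLogLik γ s x) (-1/σ + (γ + 1) * x / (σ * (σ + γ * x))) σ := by
  have hu : HasDerivAt (fun s => 1 + γ * x / s) (-(γ * x) / σ^2) σ :=
    (hasDerivAt_const σ (γ * x)).div (hasDerivAt_id' σ) hσ |>.const_add 1
      |>.congr_deriv (by ring)
  refine (hasDerivAt_log hσ).neg.sub ((hu.log hw).const_mul (1 + 1/γ)) |>.congr_deriv ?_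
  have := add_mul_ne_zero_of_one_add_mul_div_ne_zero hσ hw
  field_simp
  ring

lemma hasDerivAt_deriv_gpLogLik_scale (hσ : σ ≠ 0) (hw : 1 + γ * x / σ ≠ 0) :
    HasDerivAt (fun s => -1/s + (γ + 1) * x / (s * (s + γ * x)))
      (1/σ^2 - (γ + 1) * x * (2 * σ + γ * x) / (σ * (σ + γ * x))^2) σ := by
  have := add_mul_ne_zero_of_one_add_mul_div_ne_zero hσ hw
  have hq : HasDerivAt (fun s => s * (s + γ * x)) (2 * σ + γ * x) σ :=
    (hasDerivAt_id' σ).mul ((hasDerivAt_id' σ).add_const (γ * x)) |>.congr_deriv (by ring)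
  refine ((hasDerivAt_const σ (-1)).div (hasDerivAt_id' σ) hσ).add
    ((hasDerivAt_const σ ((γ + 1) * x)).div hq (mul_ne_zero hσ this)) |>.congr_deriv ?_
  field_simp
  ring

lemma hasDerivAt_deriv_gpLogLik_scale_shape (hσ : σ ≠ 0) (hw : 1 + γ * x / σ ≠ 0) :
    HasDerivAt (fun g => -1/σ + (g + 1) * x / (σ * (σ + g * x)))
      (x * (σ - x) / (σ * (σ + γ * x)^2)) γ := by
  have := add_mul_ne_zero_of_one_add_mul_div_ne_zero hσ hw
  have hq : HasDerivAt (fun g => σ * (σ + g * x)) (σ * x) γ :=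
    ((hasDerivAt_id' γ).mul_const x).const_add σ |>.const_mul σ |>.congr_deriv (by ring)
  refine (((hasDerivAt_id' γ).add_const 1).mul_const x).div hq (mul_ne_zero hσ this)
    |>.const_add (-1/σ) |>.congr_deriv ?_
  field_simp
  ring

lemma deriv_deriv_gpLogLik_shape (hγ0 : γ ≠ 0) (hw : 1 + γ * x / σ ≠ 0) :
    deriv (deriv fun g => gpLogLik g σ x) γ =
      -2 * log (1 + γ * x / σ) / γ^3 + 2 / γ^2 * (x / σ / (1 + γ * x / σ))
        + (1 + 1/γ) * (x / σ / (1 + γ * x / σ))^2 := by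
  have hcont : ContinuousAt (fun g => 1 + g * x / σ) γ := by fun_prop
  have : deriv (fun g => gpLogLik g σ x) =ᶠ[𝓝 γ]
      fun g => log (1 + g * x / σ) / g^2 - (1 + 1/g) * (x / σ / (1 + g * x / σ)) := by
    filter_upwards [eventually_ne_nhds hγ0, hcont.eventually_ne hw] with g hg hwg
    exact (hasDerivAt_gpLogLik_shape hg hwg).deriv
  rw [this.deriv_eq]
  exact (hasDerivAt_deriv_gpLogLik_shape hγ0 hw).deriv

lemma deriv_deriv_gpLogLik_scale (hγ0 : γ ≠ 0) (hσ : σ ≠ 0) (hw : 1 + γ * x / σ ≠ 0) :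
    deriv (deriv fun s => gpLogLik γ s x) σ =
      1/σ^2 - (γ + 1) * x * (2 * σ + γ * x) / (σ * (σ + γ * x))^2 := by
  have hcont : ContinuousAt (fun s => 1 + γ * x / s) σ := by fun_prop (disch := exact hσ)
  have : deriv (fun s => gpLogLik γ s x) =ᶠ[𝓝 σ]
      fun s => -1/s + (γ + 1) * x / (s * (s + γ * x)) := by
    filter_upwards [eventually_ne_nhds hσ, hcont.eventually_ne hw] with s hs hws
    exact (hasDerivAt_gpLogLik_scale hγ0 hs hws).deriv
  rw [this.deriv_eq]
  exact (hasDerivAt_deriv_gpLogLik_scale hσ hw).deriv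

lemma deriv_deriv_gpLogLik_scale_shape (hγ0 : γ ≠ 0) (hσ : σ ≠ 0)
    (hw : 1 + γ * x / σ ≠ 0) :
    deriv (fun g => deriv (fun s => gpLogLik g s x) σ) γ =
      x * (σ - x) / (σ * (σ + γ * x)^2) := by
  have hcont : ContinuousAt (fun g => 1 + g * x / σ) γ := by fun_prop
  have : (fun g => deriv (fun s => gpLogLik g s x) σ) =ᶠ[𝓝 γ]
      fun g => -1/σ + (g + 1) * x / (σ * (σ + g * x)) := by
    filter_upwards [eventually_ne_nhds hγ0, hcont.eventually_ne hw] with g hg hwg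
    exact (hasDerivAt_gpLogLik_scale hg hσ hwg).deriv
  rw [this.deriv_eq]
  exact (hasDerivAt_deriv_gpLogLik_scale_shape hσ hw).deriv

end Derivatives

namespace GeneralizedPareto

variable {γ σ : ℝ}

def IsLaw (γ σ : ℝ) (μ : Measure ℝ) : Prop :=
  (γ < 0 → μ (Ici (σ / (-γ))) = 0) ∧
  ∀ x : ℝ, 0 ≤ x → (γ < 0 → x < σ / (-γ)) →
    μ (Ioi x) = ENNReal.ofReal ((1 + γ * x / σ) ^ (-(1/γ)))

namespace IsLaw

variable {μ ν : Measure ℝ}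

lemma measure_Ioi_of_neg [IsProbabilityMeasure μ] (h : IsLaw γ σ μ) (hσ : 0 < σ) {a : ℝ}
    (ha : a < 0) : μ (Ioi a) = 1 := by
  have h₀ : μ (Ioi 0) = 1 := by
    simpa using h.2 0 le_rfl fun hγ => div_pos hσ (neg_pos.2 hγ)
  exact le_antisymm prob_le_one (h₀ ▸ measure_mono (Ioi_subset_Ioi ha.le))

lemma measure_Ioi_of_le (h : IsLaw γ σ μ) (hγ : γ < 0) {a : ℝ} (ha : σ / (-γ) ≤ a) :
    μ (Ioi a) = 0 :=
  measure_mono_null (Ioi_subset_Ici ha) (h.1 hγ)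

lemma unique [IsProbabilityMeasure μ] [IsProbabilityMeasure ν]
    (hμ : IsLaw γ σ μ) (hν : IsLaw γ σ ν) (hσ : 0 < σ) : μ = ν := by
  refine Measure.ext_of_Ioi fun a => ?_
  rcases lt_or_ge a 0 with ha | ha
  · rw [hμ.measure_Ioi_of_neg hσ ha, hν.measure_Ioi_of_neg hσ ha]
  by_cases hcut : γ < 0 ∧ σ / (-γ) ≤ a
  · rw [hμ.measure_Ioi_of_le hcut.1 hcut.2, hν.measure_Ioi_of_le hcut.1 hcut.2]
  · have hlt : γ < 0 → a < σ / (-γ) := fun hγ => lt_of_not_ge fun h => hcut ⟨hγ, h⟩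
    rw [hμ.2 a ha hlt, hν.2 a ha hlt]

end IsLaw

noncomputable def quantile (γ σ v : ℝ) : ℝ := σ * (v ^ (-γ) - 1) / γ

noncomputable def measure (γ σ : ℝ) : Measure ℝ :=
  (volume.restrict (Ioc 0 1)).map (quantile γ σ)

@[fun_prop]
lemma measurable_quantile : Measurable (quantile γ σ) := by
  unfold quantile; fun_prop

lemma one_add_mul_quantile_div (hγ0 : γ ≠ 0) (hσ : σ ≠ 0) (v : ℝ) :
    1 + γ * quantile γ σ v / σ = v ^ (-γ) := by
  unfold quantile; field_simp; ring

lemma one_add_mul_quantile_div_pos (hγ0 : γ ≠ 0) (hσ : σ ≠ 0) {v : ℝ} (hv : 0 < v) :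
    0 < 1 + γ * quantile γ σ v / σ := by
  rw [one_add_mul_quantile_div hγ0 hσ]
  exact rpow_pos_of_pos hv _

lemma strictAntiOn_quantile (hγ0 : γ ≠ 0) (hσ : 0 < σ) :
    StrictAntiOn (quantile γ σ) (Ioi 0) := by
  intro u hu v hv huv
  unfold quantile
  rcases hγ0.lt_or_gt with hneg | hpos
  · have := rpow_lt_rpow (le_of_lt hu) huv (neg_pos.2 hneg)
    rw [div_lt_div_right_of_neg hneg]
    nlinarith
  · have := rpow_lt_rpow_of_neg hu huv (neg_neg_of_pos hpos)
    rw [div_lt_div_iff_of_pos_right hpos]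
    nlinarith

lemma quantile_rpow (hγ0 : γ ≠ 0) (hσ : σ ≠ 0) {x : ℝ} (hx : 0 < 1 + γ * x / σ) :
    quantile γ σ ((1 + γ * x / σ) ^ (-(1/γ))) = x := by
  have : ((1 + γ * x / σ) ^ (-(1/γ))) ^ (-γ) = 1 + γ * x / σ := by
    rw [← rpow_mul hx.le, neg_mul_neg, one_div_mul_cancel hγ0, rpow_one]
  unfold quantile
  rw [this]
  field_simp
  ring

lemma lt_quantile_iff (hγ0 : γ ≠ 0) (hσ : 0 < σ) {x v : ℝ} (hx : 0 < 1 + γ * x / σ)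
    (hv : 0 < v) : x < quantile γ σ v ↔ v < (1 + γ * x / σ) ^ (-(1/γ)) := by
  conv_lhs => rw [← quantile_rpow hγ0 hσ.ne' hx]
  exact (strictAntiOn_quantile hγ0 hσ).lt_iff_gt (rpow_pos_of_pos hx _) hv

lemma quantile_lt_of_neg (hγ : γ < 0) (hσ : 0 < σ) {v : ℝ} (hv : 0 < v) :
    quantile γ σ v < σ / (-γ) := by
  have := rpow_pos_of_pos hv (-γ)
  rw [quantile, ← neg_div_neg_eq, div_lt_div_iff_of_pos_right (neg_pos.2 hγ)]
  nlinarith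

lemma one_add_mul_div_pos (hσ : 0 < σ) {x : ℝ} (hx : 0 ≤ x) (hxe : γ < 0 → x < σ / (-γ)) :
    0 < 1 + γ * x / σ := by
  have : 0 < σ + γ * x := by
    rcases le_or_gt 0 γ with hpos | hneg
    · positivity
    · have := (lt_div_iff₀ (neg_pos.2 hneg)).1 (hxe hneg)
      linarith
  rw [show 1 + γ * x / σ = (σ + γ * x) / σ by field_simp]
  positivity

instance : IsProbabilityMeasure (measure γ σ) :=
  have : IsProbabilityMeasure (volume.restrict (Ioc (0 : ℝ) 1)) := ⟨by simp⟩
  Measure.isProbabilityMeasure_map measurable_quantile.aemeasurable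

lemma isLaw_measure (hγ0 : γ ≠ 0) (hσ : 0 < σ) : IsLaw γ σ (measure γ σ) := by
  refine ⟨fun hneg => ?_, fun x hx hxe => ?_⟩
  · rw [measure, Measure.map_apply measurable_quantile measurableSet_Ici,
      Measure.restrict_apply (measurable_quantile measurableSet_Ici)]
    convert measure_empty (μ := volume)
    refine eq_empty_of_forall_notMem fun v ⟨hQ, hv, _⟩ => ?_
    exact (quantile_lt_of_neg hneg hσ hv).not_ge hQ
  · have hw := one_add_mul_div_pos hσ hx hxe
    have hS : (1 + γ * x / σ) ^ (-(1/γ)) ≤ 1 := by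
      refine le_of_not_gt fun h => hx.not_gt ?_
      simpa [quantile] using (lt_quantile_iff hγ0 hσ hw one_pos).2 h
    have : quantile γ σ ⁻¹' Ioi x ∩ Ioc 0 1 = Ioo 0 ((1 + γ * x / σ) ^ (-(1/γ))) := by
      ext v
      simp only [mem_inter_iff, mem_preimage, mem_Ioi, mem_Ioc, mem_Ioo]
      constructor
      · rintro ⟨hQ, hv, -⟩
        exact ⟨hv, (lt_quantile_iff hγ0 hσ hw hv).1 hQ⟩
      · rintro ⟨hv, hvS⟩
        exact ⟨(lt_quantile_iff hγ0 hσ hw hv).2 hvS, hv, hvS.le.trans hS⟩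
    rw [measure, Measure.map_apply measurable_quantile measurableSet_Ioi,
      Measure.restrict_apply (measurable_quantile measurableSet_Ioi), this, volume_Ioo, sub_zero]

lemma ae_one_add_mul_div_pos (hγ0 : γ ≠ 0) (hσ : σ ≠ 0) :
    ∀ᵐ x ∂measure γ σ, 0 < 1 + γ * x / σ := by
  refine (ae_map_iff measurable_quantile.aemeasurable
    (measurableSet_lt (by fun_prop) (by fun_prop))).2 ?_
  exact ae_restrict_of_forall_mem measurableSet_Ioc fun v hv =>
    one_add_mul_quantile_div_pos hγ0 hσ hv.1

lemma integral_measure {F : ℝ → ℝ} (hF : AEStronglyMeasurable F (measure γ σ)) :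
    ∫ x, F x ∂measure γ σ = ∫ v in Ioc 0 1, F (quantile γ σ v) := by
  rw [measure, integral_map measurable_quantile.aemeasurable hF]

lemma deriv_deriv_gpLogLik_shape_quantile (hγ0 : γ ≠ 0) (hσ : σ ≠ 0) {v : ℝ}
    (hv : 0 < v) :
    deriv (deriv fun g => gpLogLik g σ (quantile γ σ v)) γ =
      2 * log v / γ^2 + (1 - v ^ γ) * (2 + (1 + γ) * (1 - v ^ γ)) / γ^3 := by
  rw [deriv_deriv_gpLogLik_shape hγ0 (one_add_mul_quantile_div_pos hγ0 hσ hv).ne',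
    one_add_mul_quantile_div hγ0 hσ, log_rpow hv, quantile, rpow_neg hv.le]
  have := (rpow_pos_of_pos hv γ).ne'
  field_simp
  ring

lemma deriv_deriv_gpLogLik_scale_quantile (hγ0 : γ ≠ 0) (hσ : σ ≠ 0) {v : ℝ}
    (hv : 0 < v) :
    deriv (deriv fun s => gpLogLik γ s (quantile γ σ v)) σ =
      ((γ + 1) * (v ^ γ)^2 - 1) / (γ * σ^2) := by
  rw [deriv_deriv_gpLogLik_scale hγ0 hσ (one_add_mul_quantile_div_pos hγ0 hσ hv).ne', quantile,
    rpow_neg hv.le]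
  have := (rpow_pos_of_pos hv γ).ne'
  field_simp
  ring

lemma deriv_deriv_gpLogLik_scale_shape_quantile (hγ0 : γ ≠ 0) (hσ : σ ≠ 0) {v : ℝ}
    (hv : 0 < v) :
    deriv (fun g => deriv (fun s => gpLogLik g s (quantile γ σ v)) σ) γ =
      (1 - v ^ γ) * ((γ + 1) * v ^ γ - 1) / (γ^2 * σ) := by
  rw [deriv_deriv_gpLogLik_scale_shape hγ0 hσ (one_add_mul_quantile_div_pos hγ0 hσ hv).ne',
    quantile, rpow_neg hv.le]
  have := (rpow_pos_of_pos hv γ).ne'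
  field_simp
  ring

lemma integral_measure_of_comp_quantile_eq {F C : ℝ → ℝ} (hγ0 : γ ≠ 0) (hγ : -1/2 < γ)
    (hσ : σ ≠ 0) (hC : Measurable C) (hFC : ∀ x, 0 < 1 + γ * x / σ → F x = C x)
    {c₀ c₁ c₂ c₃ : ℝ} (hFQ : ∀ v, 0 < v →
      F (quantile γ σ v) = c₀ + c₁ * v ^ γ + c₂ * (v ^ γ) ^ 2 + c₃ * log v) :
    ∫ x, F x ∂measure γ σ = c₀ + c₁ / (1 + γ) + c₂ / (1 + 2 * γ) - c₃ := by
  have hFC' : F =ᵐ[measure γ σ] C := (ae_one_add_mul_div_pos hγ0 hσ).mono hFC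
  rw [integral_measure (hC.aestronglyMeasurable.congr hFC'.symm),
    setIntegral_congr_fun measurableSet_Ioc fun v hv => hFQ v hv.1,
    integral_Ioc_zero_one_quadratic_rpow_add_log hγ]

lemma neg_integral_deriv_deriv_gpLogLik_shape (hγ0 : γ ≠ 0) (hγ : -1/2 < γ) (hσ : σ ≠ 0) :
    -(∫ x, deriv (deriv fun g => gpLogLik g σ x) γ ∂measure γ σ) =
      2 / ((1 + γ) * (1 + 2 * γ)) := by
  rw [integral_measure_of_comp_quantile_eq hγ0 hγ hσ (by fun_prop)
    (fun x hx => deriv_deriv_gpLogLik_shape hγ0 hx.ne')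
    (c₀ := (γ + 3) / γ^3) (c₁ := -(2 * γ + 4) / γ^3) (c₂ := (γ + 1) / γ^3) (c₃ := 2 / γ^2)
    fun v hv => by rw [deriv_deriv_gpLogLik_shape_quantile hγ0 hσ hv]; ring]
  have : 1 + γ ≠ 0 := by linarith
  have : 1 + γ * 2 ≠ 0 := by linarith
  field_simp
  ring

lemma neg_integral_deriv_deriv_gpLogLik_scale (hγ0 : γ ≠ 0) (hγ : -1/2 < γ) (hσ : σ ≠ 0) :
    -(∫ x, deriv (deriv fun s => gpLogLik γ s x) σ ∂measure γ σ) * σ^2 = 1 / (1 + 2 * γ) := by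
  rw [integral_measure_of_comp_quantile_eq hγ0 hγ hσ (by fun_prop)
    (fun x hx => deriv_deriv_gpLogLik_scale hγ0 hσ hx.ne')
    (c₀ := -1 / (γ * σ^2)) (c₁ := 0) (c₂ := (γ + 1) / (γ * σ^2)) (c₃ := 0)
    fun v hv => by rw [deriv_deriv_gpLogLik_scale_quantile hγ0 hσ hv]; ring]
  have : 1 + γ * 2 ≠ 0 := by linarith
  field_simp
  ring

lemma neg_integral_deriv_deriv_gpLogLik_scale_shape (hγ0 : γ ≠ 0) (hγ : -1/2 < γ)
    (hσ : σ ≠ 0) :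
    -(∫ x, deriv (fun g => deriv (fun s => gpLogLik g s x) σ) γ ∂measure γ σ) * σ =
      1 / ((1 + γ) * (1 + 2 * γ)) := by
  rw [integral_measure_of_comp_quantile_eq hγ0 hγ hσ (by fun_prop)
    (fun x hx => deriv_deriv_gpLogLik_scale_shape hγ0 hσ hx.ne')
    (c₀ := -1 / (γ^2 * σ)) (c₁ := (γ + 2) / (γ^2 * σ)) (c₂ := -(γ + 1) / (γ^2 * σ)) (c₃ := 0)
    fun v hv => by rw [deriv_deriv_gpLogLik_scale_shape_quantile hγ0 hσ hv]; ring]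
  have : 1 + γ ≠ 0 := by linarith
  have : 1 + γ * 2 ≠ 0 := by linarith
  field_simp
  ring

end GeneralizedPareto

theorem stmt_7_general (γ σ : ℝ) (hγ0 : γ ≠ 0) (hγ : -1/2 < γ) (hσ : 0 < σ)
    (μ : Measure ℝ) [IsProbabilityMeasure μ]
    (hsupp1 : γ < 0 → μ (Set.Ici (σ / (-γ))) = 0)
    (hsurv : ∀ x : ℝ, 0 ≤ x → (γ < 0 → x < σ / (-γ)) →
      μ (Set.Ioi x) = ENNReal.ofReal ((1 + γ * x / σ) ^ (-(1/γ)))) :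
    -(∫ x, deriv (deriv fun g => gpLogLik g σ x) γ ∂μ) = 2 / ((1+γ) * (1+2*γ)) ∧
    -(∫ x, deriv (deriv fun s => gpLogLik γ s x) σ ∂μ) * σ^2 = 1 / (1+2*γ) ∧
    -(∫ x, deriv (fun g => deriv (fun s => gpLogLik g s x) σ) γ ∂μ) * σ =
      1 / ((1+γ) * (1+2*γ)) := by
  obtain rfl : μ = GeneralizedPareto.measure γ σ :=
    GeneralizedPareto.IsLaw.unique ⟨hsupp1, hsurv⟩ (GeneralizedPareto.isLaw_measure hγ0 hσ) hσ
  exact ⟨GeneralizedPareto.neg_integral_deriv_deriv_gpLogLik_shape hγ0 hγ hσ.ne',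
    GeneralizedPareto.neg_integral_deriv_deriv_gpLogLik_scale hγ0 hγ hσ.ne',
    GeneralizedPareto.neg_integral_deriv_deriv_gpLogLik_scale_shape hγ0 hγ hσ.ne'⟩

/-- If `X ~ GP_{γ,σ}` with `γ > -1/2`, `γ ≠ 0`, `σ > 0`, then the negative expected second
partial derivatives of `ℓ` give the Fisher information:
`-E[∂²ℓ/∂γ²] = 2/((1+γ)(1+2γ))`, `-E[∂²ℓ/∂σ²]·σ² = 1/(1+2γ)`,
`-E[∂²ℓ/∂γ∂σ]·σ = 1/((1+γ)(1+2γ))`. -/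
theorem stmt_7 (γ σ : ℝ) (hγ0 : γ ≠ 0) (hγ : -1/2 < γ) (hσ : 0 < σ)
    (μ : Measure ℝ) [IsProbabilityMeasure μ]
    (hsupp0 : μ (Set.Iio 0) = 0)
    (hsupp1 : γ < 0 → μ (Set.Ici (σ / (-γ))) = 0)
    (hsurv : ∀ x : ℝ, 0 ≤ x → (γ < 0 → x < σ / (-γ)) →
      μ (Set.Ioi x) = ENNReal.ofReal ((1 + γ * x / σ) ^ (-(1/γ)))) :
    -(∫ x, deriv (deriv fun g => gpLogLik g σ x) γ ∂μ) = 2 / ((1+γ) * (1+2*γ)) ∧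
    -(∫ x, deriv (deriv fun s => gpLogLik γ s x) σ ∂μ) * σ^2 = 1 / (1+2*γ) ∧
    -(∫ x, deriv (fun g => deriv (fun s => gpLogLik g s x) σ) γ ∂μ) * σ =
      1 / ((1+γ) * (1+2*γ)) :=
  stmt_7_general γ σ hγ0 hγ hσ μ hsupp1 hsurv
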